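/- Let H ∈ (1/2, 1) and T > 0. There exists a constant c > 0, depending only on H and T, such that for every measurable f : [0,T] → ℝ one has ∫₀ᵀ∫₀ᵀ φ(u−v) |f(u)| |f(v)| du dv ≤ c · ∫₀ᵀ |f(s)|² ds. In particular every f ∈ L²([0,T]) has finite |ℋ|-norm ‖f‖_{|ℋ|}² = ∫₀ᵀ∫₀ᵀ φ(u−v)|f(u)||f(v)| du dv. -/

import Mathlib

open MeasureTheory Set

/-- The fractional kernel `φ(x) = H(2H−1)|x|^{2H−2}`. -/
noncomputable def fracKernel (H x : ℝ) : ℝ := H * (2 * H - 1) * |x| ^ (2 * H - 2)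

/-!
For `H > 1/2` the kernel `φ` is nonnegative, and since `2H − 2 > −1` it is integrable on
`[−T, T]`. For a difference kernel `g (u − v)` on `[0, T]²`, every row and every column integral
is at most `∫_{−T}^{T} g`, so the Schur test (`2 |f u| |f v| ≤ f u ² + f v ²`, integrated against
the kernel) bounds the quadratic form by `(∫_{−T}^{T} φ) · ∫₀ᵀ f²`.
-/

open scoped ENNReal

theorem ENNReal.two_mul_le_add_sq (a b : ℝ≥0∞) : 2 * a * b ≤ a ^ 2 + b ^ 2 := by
  induction a with
  | top => simp [ENNReal.top_pow]
  | coe a =>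
    induction b with
    | top => simp [ENNReal.top_pow]
    | coe b => exact_mod_cast _root_.two_mul_le_add_sq a b

section SchurTest

variable {α : Type*} [MeasurableSpace α] {μ : Measure α} [SFinite μ]
  {k : α → α → ℝ≥0∞} {C : ℝ≥0∞}

theorem lintegral_prod_kernel_mul_le (hk : Measurable (Function.uncurry k))
    (hrow : ∀ᵐ x ∂μ, ∫⁻ y, k x y ∂μ ≤ C) {b : α → ℝ≥0∞} (hb : Measurable b) :
    ∫⁻ p, k p.1 p.2 * b p.1 ∂μ.prod μ ≤ C * ∫⁻ x, b x ∂μ := by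
  have hm : Measurable fun p : α × α => k p.1 p.2 * b p.1 := hk.mul (hb.comp measurable_fst)
  rw [lintegral_prod _ hm.aemeasurable, ← lintegral_const_mul _ hb]
  refine lintegral_mono_ae (hrow.mono fun x hx => ?_)
  dsimp only
  rw [lintegral_mul_const _ hk.of_uncurry_left]
  exact mul_le_mul_left hx _

theorem lintegral_prod_kernel_mul_mul_le (hk : Measurable (Function.uncurry k))
    (hrow : ∀ᵐ x ∂μ, ∫⁻ y, k x y ∂μ ≤ C) (hcol : ∀ᵐ y ∂μ, ∫⁻ x, k x y ∂μ ≤ C)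
    {a : α → ℝ≥0∞} (ha : Measurable a) :
    ∫⁻ p, k p.1 p.2 * (a p.1 * a p.2) ∂μ.prod μ ≤ C * ∫⁻ x, a x ^ 2 ∂μ := by
  have hk' : Measurable (Function.uncurry fun x y => k y x) := hk.comp measurable_swap
  have hfst := lintegral_prod_kernel_mul_le hk hrow (ha.pow_const 2)
  have hsnd := lintegral_prod_kernel_mul_le hk' hcol (ha.pow_const 2)
  rw [← lintegral_prod_swap] at hsnd
  refine (ENNReal.mul_le_mul_iff_right two_ne_zero ENNReal.ofNat_ne_top).mp ?_
  calc 2 * ∫⁻ p, k p.1 p.2 * (a p.1 * a p.2) ∂μ.prod μ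
      = ∫⁻ p, k p.1 p.2 * (2 * a p.1 * a p.2) ∂μ.prod μ := by
        rw [← lintegral_const_mul' _ _ ENNReal.ofNat_ne_top]
        congr 1 with p
        ring
    _ ≤ ∫⁻ p, (k p.1 p.2 * a p.1 ^ 2 + k p.1 p.2 * a p.2 ^ 2) ∂μ.prod μ := by
        gcongr with p
        rw [← mul_add]
        gcongr
        exact ENNReal.two_mul_le_add_sq _ _
    _ = ∫⁻ p, k p.1 p.2 * a p.1 ^ 2 ∂μ.prod μ + ∫⁻ p, k p.1 p.2 * a p.2 ^ 2 ∂μ.prod μ :=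
        lintegral_add_left (hk.mul ((ha.pow_const 2).comp measurable_fst)) _
    _ ≤ 2 * (C * ∫⁻ x, a x ^ 2 ∂μ) := by
        rw [two_mul]
        exact add_le_add hfst hsnd

end SchurTest

theorem setLIntegral_Icc_comp_sub_left_le (g : ℝ → ℝ≥0∞) {s t u : ℝ} (hu : u ∈ Icc s t) :
    ∫⁻ v in Icc s t, g (u - v) ≤ ∫⁻ w in Icc (s - t) (t - s), g w := by
  rw [(Measure.measurePreserving_sub_left volume u).setLIntegral_comp_emb
    (MeasurableEquiv.subLeft u).measurableEmbedding, image_const_sub_Icc]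
  exact lintegral_mono_set (Icc_subset_Icc (by linarith [hu.1]) (by linarith [hu.2]))

theorem setLIntegral_Icc_comp_sub_right_le (g : ℝ → ℝ≥0∞) {s t v : ℝ} (hv : v ∈ Icc s t) :
    ∫⁻ u in Icc s t, g (u - v) ≤ ∫⁻ w in Icc (s - t) (t - s), g w := by
  rw [(measurePreserving_sub_right volume v).setLIntegral_comp_emb
    (MeasurableEquiv.subRight v).measurableEmbedding, image_sub_const_Icc]
  exact lintegral_mono_set (Icc_subset_Icc (by linarith [hv.2]) (by linarith [hv.1]))

theorem setLIntegral_Icc_prod_comp_sub_mul_mul_le {g : ℝ → ℝ≥0∞} (hg : Measurable g)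
    {a : ℝ → ℝ≥0∞} (ha : Measurable a) (s t : ℝ) :
    ∫⁻ p in Icc s t ×ˢ Icc s t, g (p.1 - p.2) * (a p.1 * a p.2)
      ≤ (∫⁻ w in Icc (s - t) (t - s), g w) * ∫⁻ x in Icc s t, a x ^ 2 := by
  rw [Measure.volume_eq_prod, ← Measure.prod_restrict]
  exact lintegral_prod_kernel_mul_mul_le (k := fun u v => g (u - v))
    (hg.comp (measurable_fst.sub measurable_snd))
    ((ae_restrict_mem measurableSet_Icc).mono fun u hu => setLIntegral_Icc_comp_sub_left_le g hu)
    ((ae_restrict_mem measurableSet_Icc).mono fun v hv => setLIntegral_Icc_comp_sub_right_le g hv)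
    ha

theorem fracKernel_nonneg {H : ℝ} (hH : 1 / 2 ≤ H) (x : ℝ) : 0 ≤ fracKernel H x := by
  unfold fracKernel
  exact mul_nonneg (mul_nonneg (by linarith) (by linarith)) (Real.rpow_nonneg (abs_nonneg x) _)

theorem measurable_fracKernel (H : ℝ) : Measurable (fracKernel H) := by
  unfold fracKernel
  fun_prop

theorem locallyIntegrable_fracKernel {H : ℝ} (hH : 1 / 2 < H) :
    LocallyIntegrable (fracKernel H) := by
  refine locallyIntegrable_of_norm_le_rpow (C := H * (2 * H - 1)) (α := 2 - 2 * H)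
    (by simp) (by rw [Module.finrank_self, Nat.cast_one]; linarith)
    (Filter.Eventually.of_forall fun x => ?_) (measurable_fracKernel H).aestronglyMeasurable
  rw [Real.norm_of_nonneg (fracKernel_nonneg hH.le x), Real.norm_eq_abs, neg_sub, fracKernel]

theorem L2_embeds_in_absH_general (H T : ℝ) (hH : H ∈ Set.Ioo (1/2 : ℝ) 1) :
    ∃ c : ℝ, 0 < c ∧ ∀ f : ℝ → ℝ, Measurable f →
      (∫⁻ p in Set.Icc (0:ℝ) T ×ˢ Set.Icc (0:ℝ) T,
          ENNReal.ofReal (fracKernel H (p.1 - p.2) * |f p.1| * |f p.2|))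
        ≤ ENNReal.ofReal c *
          ∫⁻ s in Set.Icc (0:ℝ) T, ENNReal.ofReal ((f s) ^ 2) := by
  set C := ∫⁻ w in Icc (0 - T) (T - 0), ENNReal.ofReal (fracKernel H w)
  have hC : C ≠ ⊤ :=
    ((locallyIntegrable_fracKernel hH.1).integrableOn_isCompact isCompact_Icc).lintegral_lt_top.ne
  refine ⟨C.toReal + 1, by positivity, fun f hf => ?_⟩
  calc (∫⁻ p in Icc (0:ℝ) T ×ˢ Icc (0:ℝ) T,
          ENNReal.ofReal (fracKernel H (p.1 - p.2) * |f p.1| * |f p.2|))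
      = ∫⁻ p in Icc (0:ℝ) T ×ˢ Icc (0:ℝ) T, ENNReal.ofReal (fracKernel H (p.1 - p.2)) *
          (ENNReal.ofReal |f p.1| * ENNReal.ofReal |f p.2|) := by
        congr 1 with p
        rw [mul_assoc, ENNReal.ofReal_mul (fracKernel_nonneg hH.1.le _),
          ENNReal.ofReal_mul (abs_nonneg _)]
    _ ≤ C * ∫⁻ s in Icc (0:ℝ) T, ENNReal.ofReal |f s| ^ 2 :=
        setLIntegral_Icc_prod_comp_sub_mul_mul_le
          (measurable_fracKernel H).ennreal_ofReal hf.abs.ennreal_ofReal 0 T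
    _ = C * ∫⁻ s in Icc (0:ℝ) T, ENNReal.ofReal (f s ^ 2) := by
        simp_rw [← ENNReal.ofReal_pow (abs_nonneg _), sq_abs]
    _ ≤ ENNReal.ofReal (C.toReal + 1) * ∫⁻ s in Icc (0:ℝ) T, ENNReal.ofReal (f s ^ 2) := by
        gcongr
        exact (ENNReal.le_ofReal_iff_toReal_le hC (by positivity)).mpr (by linarith)

/-- Continuous embedding of `L²([0,T])` into `|ℋ|`: there is a constant `c > 0`,
depending only on `H` and `T`, such that for every measurable `f`,
`∫₀ᵀ∫₀ᵀ φ(u−v)|f(u)||f(v)| du dv ≤ c ∫₀ᵀ |f(s)|² ds`. -/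
theorem L2_embeds_in_absH (H T : ℝ) (hH : H ∈ Set.Ioo (1/2 : ℝ) 1) (hT : 0 < T) :
    ∃ c : ℝ, 0 < c ∧ ∀ f : ℝ → ℝ, Measurable f →
      (∫⁻ p in Set.Icc (0:ℝ) T ×ˢ Set.Icc (0:ℝ) T,
          ENNReal.ofReal (fracKernel H (p.1 - p.2) * |f p.1| * |f p.2|))
        ≤ ENNReal.ofReal c *
          ∫⁻ s in Set.Icc (0:ℝ) T, ENNReal.ofReal ((f s) ^ 2) :=
  L2_embeds_in_absH_general H T hH
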